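/- Let p be a prime with p ∉ {2, 3, 7, 43}. Then p · {1, 2, 6, 42, 1806} = {p, 2p, 6p, 42p, 1806p} ⊆ M_p^(1); that is, each of the integers p, 2p, 6p, 42p, 1806p is divisible by p exactly once and satisfies S_n(n) ≡ p (mod n). -/

import Mathlib

/-- `S k n = ∑_{i=1}^{n} i^k`. -/
def S (k n : ℕ) : ℕ := ∑ i ∈ Finset.Icc 1 n, i ^ k

/-!
For a prime `q` and `k ≠ 0`, the residues of `1, …, qm` modulo `q` run `m` times through `𝔽_q`,
so `S_k(qm) ≡ m · ∑_{x ∈ 𝔽_q} x^k`, which is `-m (mod q)` if `q - 1 ∣ k` and `0` otherwise.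
Every `c ∈ {1, 2, 6, 42, 1806}` satisfies `q - 1 ∣ c` and `c / q ≡ -1 (mod q)` for each prime
`q ∣ c`, so `n = pc` gives `S_n(n) ≡ -(c / q) p ≡ p (mod q)`. At `q = p`, `p - 1 ∣ n` would make
`p - 1` a divisor `d` of `1806` with `d + 1` prime, i.e. `p ∈ {2, 3, 7, 43}`; hence
`S_n(n) ≡ 0 ≡ p (mod p)`. As `n` is squarefree, these congruences combine to one modulo `n`.
-/

open Finset

theorem Function.Periodic.sum_range_mul {M : Type*} [AddCommMonoid M] {f : ℕ → M} {q : ℕ}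
    (hf : Function.Periodic f q) (m : ℕ) :
    ∑ i ∈ range (q * m), f i = m • ∑ i ∈ range q, f i := by
  induction m with
  | zero => simp
  | succ m ih =>
    rw [Nat.mul_succ, sum_range_add, ih, succ_nsmul]
    congr 1
    refine sum_congr rfl fun i _ => ?_
    rw [add_comm, mul_comm]
    exact hf.nat_mul m i

theorem ZMod.sum_range_natCast {M : Type*} [AddCommMonoid M] (q : ℕ) [NeZero q]
    (f : ZMod q → M) : ∑ i ∈ range q, f i = ∑ x : ZMod q, f x := by
  obtain ⟨n, rfl⟩ := Nat.exists_eq_succ_of_ne_zero (NeZero.ne q)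
  rw [← Fin.sum_univ_eq_sum_range (fun i => f i)]
  exact Fintype.sum_congr _ _ fun i => congrArg f (ZMod.natCast_zmod_val (n := n + 1) i)

theorem FiniteField.sum_pow {K : Type*} [Field K] [Fintype K] {k : ℕ} (hk : k ≠ 0) :
    ∑ x : K, x ^ k = if Fintype.card K - 1 ∣ k then -1 else 0 := by
  classical
  calc ∑ x : K, x ^ k
      = ∑ x : {a : K // a ≠ 0}, (x : K) ^ k + ∑ x : {a : K // ¬a ≠ 0}, (x : K) ^ k :=
        (Fintype.sum_subtype_add_sum_subtype _ _).symm
    _ = ∑ x : Kˣ, (x : K) ^ k := by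
        rw [Fintype.sum_eq_zero (fun x : {a : K // ¬a ≠ 0} => (x : K) ^ k)
          fun x => by simp [not_not.mp x.2, hk], add_zero]
        exact Fintype.sum_equiv unitsEquivNeZero.symm _ _ fun _ => rfl
    _ = _ := FiniteField.sum_pow_units K k

theorem Nat.modEq_of_squarefree_of_forall_primeFactors {n a b : ℕ} (hn : Squarefree n)
    (h : ∀ q ∈ n.primeFactors, a ≡ b [MOD q]) : a ≡ b [MOD n] := by
  rw [Nat.modEq_iff_dvd, Int.natCast_dvd, ← Nat.prod_primeFactors_of_squarefree hn]
  refine prod_primes_dvd _ (fun q hq => (Nat.prime_of_mem_primeFactors hq).prime) fun q hq => ?_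
  rw [← Int.natCast_dvd, ← Nat.modEq_iff_dvd]
  exact h q hq

theorem S_eq_sum_range (k n : ℕ) : S k n = ∑ i ∈ range n, (i + 1) ^ k := by
  rw [S, ← Ico_add_one_right_eq_Icc, sum_Ico_eq_sum_range, add_tsub_cancel_right]
  simp only [add_comm]

theorem cast_S_prime_mul {q : ℕ} [Fact q.Prime] {k : ℕ} (hk : k ≠ 0) (m : ℕ) :
    (S k (q * m) : ZMod q) = if q - 1 ∣ k then -(m : ZMod q) else 0 := by
  have hper : Function.Periodic (fun i : ℕ => ((i : ZMod q) + 1) ^ k) q := fun i => by simp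
  have hshift : ∑ x : ZMod q, (x + 1) ^ k = ∑ x : ZMod q, x ^ k :=
    Equiv.sum_comp (Equiv.addRight (1 : ZMod q)) (· ^ k)
  rw [S_eq_sum_range]
  push_cast
  rw [hper.sum_range_mul, ZMod.sum_range_natCast q (fun x => (x + 1) ^ k), hshift,
    FiniteField.sum_pow hk, ZMod.card]
  split_ifs <;> simp

theorem Nat.squarefree_of_forall_primeFactors_dvd_div_add_one {c : ℕ} (hc0 : c ≠ 0)
    (hc : ∀ q ∈ c.primeFactors, q ∣ c / q + 1) : Squarefree c := by
  rw [Nat.squarefree_iff_prime_squarefree]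
  intro q hq hqq
  have hqc : q ∈ c.primeFactors :=
    Nat.mem_primeFactors.2 ⟨hq, (dvd_mul_right q q).trans hqq, hc0⟩
  have hq_dvd : q ∣ c / q := Nat.dvd_div_of_mul_dvd hqq
  exact hq.one_lt.ne' (Nat.dvd_one.1 ((Nat.dvd_add_right hq_dvd).1 (hc q hqc)))

theorem S_prime_mul_self_modEq {c p : ℕ} (hp : p.Prime)
    (hc : ∀ q ∈ c.primeFactors, q - 1 ∣ c ∧ q ∣ c / q + 1) (hpc : ¬p ∣ c)
    (hp1 : ¬p - 1 ∣ c) : S (p * c) (p * c) ≡ p [MOD p * c] := by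
  have hc0 : c ≠ 0 := by rintro rfl; exact hpc (dvd_zero p)
  have hn0 : p * c ≠ 0 := mul_ne_zero hp.ne_zero hc0
  have hsq : Squarefree (p * c) := Nat.squarefree_mul_iff.2 ⟨hp.coprime_iff_not_dvd.2 hpc,
    hp.prime.squarefree,
    Nat.squarefree_of_forall_primeFactors_dvd_div_add_one hc0 fun q hq => (hc q hq).2⟩
  refine Nat.modEq_of_squarefree_of_forall_primeFactors hsq fun q hq => ?_
  rw [Nat.primeFactors_mul hp.ne_zero hc0, hp.primeFactors, mem_union, mem_singleton] at hq
  rcases hq with rfl | hq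
  · have := Fact.mk hp
    have hcop : Nat.Coprime (q - 1) q :=
      (Nat.coprime_self_sub_left hp.one_le).2 (Nat.coprime_one_left q)
    have hq1 : ¬q - 1 ∣ q * c := fun h => hp1 (hcop.dvd_of_dvd_mul_left h)
    rw [← ZMod.natCast_eq_natCast_iff, cast_S_prime_mul hn0, if_neg hq1, ZMod.natCast_self]
  · have := Fact.mk (Nat.prime_of_mem_primeFactors hq)
    obtain ⟨hq1, hqc⟩ := hc q hq
    have hcq : ((c / q : ℕ) : ZMod q) = -1 :=
      eq_neg_of_add_eq_zero_left (by exact_mod_cast (ZMod.natCast_eq_zero_iff _ _).2 hqc)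
    have hn : p * c = q * (c / q * p) := by
      rw [← mul_assoc, Nat.mul_div_cancel' (Nat.dvd_of_mem_primeFactors hq), mul_comm]
    rw [← ZMod.natCast_eq_natCast_iff, hn, cast_S_prime_mul (hn ▸ hn0),
      if_pos (hn ▸ dvd_mul_of_dvd_right hq1 p)]
    push_cast
    rw [hcq]
    ring

theorem mem_of_prime_dvd_1806 {p : ℕ} (hp : p.Prime) (h : p ∣ 1806) :
    p ∈ ({2, 3, 7, 43} : Set ℕ) := by
  have hp' : p ∈ Nat.primeFactors 1806 := Nat.mem_primeFactors.2 ⟨hp, h, by norm_num⟩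
  simpa [← Nat.toFinset_factors, Nat.primeFactorsList_ofNat] using hp'

theorem mem_of_prime_of_sub_one_dvd_1806 {p : ℕ} (hp : p.Prime) (h : p - 1 ∣ 1806) :
    p ∈ ({2, 3, 7, 43} : Set ℕ) := by
  obtain ⟨d, rfl⟩ := Nat.exists_eq_add_one_of_ne_zero hp.ne_zero
  have hd : d ∈ Nat.divisors 1806 := Nat.mem_divisors.2 ⟨h, by norm_num⟩
  simp only [Nat.divisors_ofNat, mem_insert, mem_singleton] at hd
  revert hp
  rcases hd with rfl | rfl | rfl | rfl | rfl | rfl | rfl | rfl | rfl | rfl | rfl | rfl | rfl |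
    rfl | rfl | rfl <;> norm_num

theorem sub_one_dvd_and_dvd_div_add_one {c : ℕ} (hc : c ∈ ({1, 2, 6, 42, 1806} : Set ℕ)) :
    ∀ q ∈ c.primeFactors, q - 1 ∣ c ∧ q ∣ c / q + 1 := by
  simp only [Set.mem_insert_iff, Set.mem_singleton_iff] at hc
  rcases hc with rfl | rfl | rfl | rfl | rfl <;>
    simp [← Nat.toFinset_factors, Nat.primeFactorsList_ofNat]

/-- For a prime `p ∉ {2, 3, 7, 43}`,
`p · {1, 2, 6, 42, 1806} = {p, 2p, 6p, 42p, 1806p} ⊆ M_p^(1)`. -/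
theorem stmt_17 (p : ℕ) (hp : p.Prime) (hne : p ∉ ({2, 3, 7, 43} : Set ℕ)) :
    (fun x => p * x) '' ({1, 2, 6, 42, 1806} : Set ℕ) =
        ({p, 2 * p, 6 * p, 42 * p, 1806 * p} : Set ℕ) ∧
      ∀ n ∈ ({p, 2 * p, 6 * p, 42 * p, 1806 * p} : Set ℕ),
        (p ∣ n ∧ ¬ p ^ 2 ∣ n) ∧ S n n ≡ p [MOD n] := by
  have himage : (fun x => p * x) '' ({1, 2, 6, 42, 1806} : Set ℕ) =
      ({p, 2 * p, 6 * p, 42 * p, 1806 * p} : Set ℕ) := by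
    simp only [Set.image_insert_eq, Set.image_singleton, mul_comm p, one_mul]
  refine ⟨himage, ?_⟩
  rw [← himage]
  rintro _ ⟨c, hc, rfl⟩
  have hc1806 : c ∣ 1806 := by
    simp only [Set.mem_insert_iff, Set.mem_singleton_iff] at hc
    rcases hc with rfl | rfl | rfl | rfl | rfl <;> norm_num
  have hpc : ¬p ∣ c := fun h => hne (mem_of_prime_dvd_1806 hp (h.trans hc1806))
  have hp1 : ¬p - 1 ∣ c := fun h => hne (mem_of_prime_of_sub_one_dvd_1806 hp (h.trans hc1806))
  refine ⟨⟨dvd_mul_right p c, ?_⟩,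
    S_prime_mul_self_modEq hp (sub_one_dvd_and_dvd_div_add_one hc) hpc hp1⟩
  rwa [pow_two, Nat.mul_dvd_mul_iff_left hp.pos]
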